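/- If P ∈ R^{n×n} is an idempotent matrix (P² = P) with P ≠ 0 and P ≠ I, then ‖I − P‖₂ = ‖P‖₂, where ‖·‖₂ is the spectral norm. -/

import Mathlib

/-!
For an idempotent `f` write `x = u + v` with `u = f x` and `v = x - f x`. When both are nonzero,
`y = u / ‖u‖² + v / ‖v‖²` has norm `‖x‖ / (‖u‖ ‖v‖)` and `(1 - f) y = v / ‖v‖²`, which forces
`‖u‖ ≤ ‖1 - f‖ ‖x‖`; when `v = 0` the same bound follows from `1 ≤ ‖1 - f‖`, true for every
nonzero idempotent. So `‖f‖ ≤ ‖1 - f‖`, and exchanging the roles of `f` and `1 - f` gives equality.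
-/

open Matrix
open scoped Matrix.Norms.L2Operator

/-- Euclidean norm of a vector in `Fin n → ℝ`. -/
noncomputable def euclNorm {n : ℕ} (v : Fin n → ℝ) : ℝ :=
  ‖(WithLp.equiv 2 (Fin n → ℝ)).symm v‖

/-- Smallest singular value: infimum of `‖M x‖₂` over unit vectors `x`. -/
noncomputable def sigmaMin {m r : ℕ} (M : Matrix (Fin m) (Fin r) ℝ) : ℝ :=
  sInf {t | ∃ x : Fin r → ℝ, euclNorm x = 1 ∧ t = euclNorm (M.mulVec x)}

/-- Largest singular value: supremum of `‖M x‖₂` over unit vectors `x`. -/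
noncomputable def sigmaMax {m r : ℕ} (M : Matrix (Fin m) (Fin r) ℝ) : ℝ :=
  sSup {t | ∃ x : Fin r → ℝ, euclNorm x = 1 ∧ t = euclNorm (M.mulVec x)}

/-- Moore–Penrose pseudoinverse of a full-column-rank matrix. -/
noncomputable def pinv {m r : ℕ} (M : Matrix (Fin m) (Fin r) ℝ) :
    Matrix (Fin r) (Fin m) ℝ :=
  (Mᵀ * M)⁻¹ * Mᵀ

/-- `S` is a row-subsampling matrix: a row-submatrix of the identity. -/
def IsSubsampling {s n : ℕ} (S : Matrix (Fin s) (Fin n) ℝ) : Prop :=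
  ∃ f : Fin s → Fin n, Function.Injective f ∧ ∀ i j, S i j = if j = f i then 1 else 0

theorem IsIdempotentElem.one_le_norm {R : Type*} [NonUnitalNormedRing R] {p : R}
    (hp : IsIdempotentElem p) (h0 : p ≠ 0) : 1 ≤ ‖p‖ := by
  have hpos : 0 < ‖p‖ := norm_pos_iff.mpr h0
  have : ‖p‖ ≤ ‖p‖ * ‖p‖ := by simpa only [hp.eq] using norm_mul_le p p
  nlinarith

section InnerProductSpace

variable {𝕜 E : Type*} [RCLike 𝕜] [NormedAddCommGroup E] [InnerProductSpace 𝕜 E]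

theorem norm_inv_sq_smul_add_inv_sq_smul {u v : E} (hu : u ≠ 0) (hv : v ≠ 0) :
    ‖(((‖u‖ ^ 2)⁻¹ : ℝ) : 𝕜) • u + (((‖v‖ ^ 2)⁻¹ : ℝ) : 𝕜) • v‖ = ‖u + v‖ / (‖u‖ * ‖v‖) := by
  have hu' : 0 < ‖u‖ := norm_pos_iff.mpr hu
  have hv' : 0 < ‖v‖ := norm_pos_iff.mpr hv
  rw [← sq_eq_sq₀ (norm_nonneg _) (by positivity), div_pow, norm_add_sq (𝕜 := 𝕜),
    norm_add_sq (𝕜 := 𝕜), inner_smul_real_left, inner_smul_real_right, norm_smul, norm_smul]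
  simp only [RCLike.norm_ofReal, RCLike.smul_re, abs_inv, abs_pow, abs_norm]
  field_simp
  ring

namespace ContinuousLinearMap

variable {f : E →L[𝕜] E}

theorem norm_apply_le_of_isIdempotentElem (hf : IsIdempotentElem f) {x : E} (hu : f x ≠ 0)
    (hv : x - f x ≠ 0) : ‖f x‖ ≤ ‖1 - f‖ * ‖x‖ := by
  have hfu : f (f x) = f x := congrArg (· x) hf.eq
  have hfv : f (x - f x) = 0 := by rw [map_sub, hfu, sub_self]
  set u := f x
  set v := x - f x
  have hu' : 0 < ‖u‖ := norm_pos_iff.mpr hu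
  have hv' : 0 < ‖v‖ := norm_pos_iff.mpr hv
  -- Inverting `u` and `v` separately in the unit sphere divides `‖u + v‖` by `‖u‖ * ‖v‖`.
  set y := (((‖u‖ ^ 2)⁻¹ : ℝ) : 𝕜) • u + (((‖v‖ ^ 2)⁻¹ : ℝ) : 𝕜) • v
  have hy : (1 - f) y = (((‖v‖ ^ 2)⁻¹ : ℝ) : 𝕜) • v := by
    simp only [y, _root_.sub_apply, one_apply_eq_self, map_add, map_smul, hfu, hfv, sub_self,
      sub_zero, smul_zero, zero_add]
  have key := (1 - f).le_opNorm y
  rw [hy, norm_inv_sq_smul_add_inv_sq_smul hu hv, show u + v = x by simp [u, v], norm_smul,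
    RCLike.norm_ofReal, abs_of_pos (by positivity)] at key
  field_simp at key
  linarith

theorem norm_le_norm_one_sub_of_isIdempotentElem (hf : IsIdempotentElem f) (h1 : f ≠ 1) :
    ‖f‖ ≤ ‖1 - f‖ := by
  refine f.opNorm_le_bound (norm_nonneg _) fun x => ?_
  by_cases hu : f x = 0
  · rw [hu, norm_zero]
    positivity
  by_cases hv : x - f x = 0
  · rw [← sub_eq_zero.mp hv]
    exact le_mul_of_one_le_left (norm_nonneg x)
      (hf.one_sub.one_le_norm (sub_ne_zero.mpr h1.symm))
  exact norm_apply_le_of_isIdempotentElem hf hu hv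

theorem norm_one_sub_eq_norm_of_isIdempotentElem (hf : IsIdempotentElem f) (h0 : f ≠ 0)
    (h1 : f ≠ 1) : ‖1 - f‖ = ‖f‖ := by
  refine le_antisymm ?_ (norm_le_norm_one_sub_of_isIdempotentElem hf h1)
  simpa using norm_le_norm_one_sub_of_isIdempotentElem hf.one_sub (by simpa using h0)

end ContinuousLinearMap

end InnerProductSpace

/-- for a nontrivial idempotent, `‖I − P‖₂ = ‖P‖₂`. -/
theorem stmt4 {n : ℕ} (P : Matrix (Fin n) (Fin n) ℝ)
    (hP : P * P = P) (h0 : P ≠ 0) (h1 : P ≠ 1) :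
    ‖(1 : Matrix (Fin n) (Fin n) ℝ) - P‖ = ‖P‖ := by
  let e := toEuclideanCLM (n := Fin n) (𝕜 := ℝ)
  have he : Function.Injective e := e.injective
  rw [cstar_norm_def, cstar_norm_def, map_sub, map_one]
  exact ContinuousLinearMap.norm_one_sub_eq_norm_of_isIdempotentElem (IsIdempotentElem.map hP e)
    (by simpa using he.ne h0) (by simpa using he.ne h1)
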